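/- (Compositionality of security, bounded time) Let 𝕊 and 𝕊′ be quantum systems with disjoint command sets C ∩ C′ = ∅, let ↝ (on A) and ↝′ (on A′) be compatible policies, and let t ≥ 0 be a natural number. Then K_t(𝕊 ⊗ 𝕊′, ↝ ∪ ↝′) ≤ K_t(𝕊, ↝) + K_t(𝕊′, ↝′). -/

import Mathlib

open scoped Classical ComplexOrder
open Matrix Kronecker

noncomputable section

/-- A density operator: positive semidefinite with trace 1. -/
def IsDensity {d : Type} [Fintype d] [DecidableEq d] (ρ : Matrix d d ℂ) : Prop :=
  ρ.PosSemidef ∧ ρ.trace = 1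

/-- A super-operator: a linear, positive, trace-preserving map on matrices. -/
def IsSuperOp {d : Type} [Fintype d] [DecidableEq d]
    (F : Matrix d d ℂ → Matrix d d ℂ) : Prop :=
  IsLinearMap ℂ F ∧ (∀ ρ : Matrix d d ℂ, ρ.PosSemidef → (F ρ).PosSemidef) ∧
    (∀ ρ : Matrix d d ℂ, (F ρ).trace = ρ.trace)

/-- A finite family of matrices (the data of a measurement). -/
structure PMeas (d : Type) where
  m : ℕ
  E : Fin m → Matrix d d ℂ

/-- The family is a POVM: positive semidefinite elements summing to the identity. -/
def PMeas.IsPOVM {d : Type} [Fintype d] [DecidableEq d] (P : PMeas d) : Prop :=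
  (∀ i, (P.E i).PosSemidef) ∧ ∑ i, P.E i = 1

/-- The distance between outcome distributions of a measurement on two states. -/
def dE {d : Type} [Fintype d] (P : PMeas d) (ρ σ : Matrix d d ℂ) : ℝ :=
  (1 / 2) * ∑ i, ‖(P.E i * ρ).trace - (P.E i * σ).trace‖

/-- The measurement pseudo-distance induced by a set of measurements. -/
def dM {d : Type} [Fintype d] (M : Set (PMeas d)) (ρ σ : Matrix d d ℂ) : ℝ :=
  sSup { x | ∃ P ∈ M, x = dE P ρ σ }

/-- A quantum system: initial state, agents, commands, super-operators, measurements. -/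
structure QSystem (Agent Cmd d : Type) where
  ρ0 : Matrix d d ℂ
  A : Set Agent
  C : Set Cmd
  Ecmd : Agent → Cmd → Matrix d d ℂ → Matrix d d ℂ
  M : Agent → Set (PMeas d)

/-- Well-formedness: the initial state is a density operator, commands act as
super-operators, and agents measure with POVMs. -/
def QSystem.WellFormed {Agent Cmd d : Type} [Fintype d] [DecidableEq d]
    (S : QSystem Agent Cmd d) : Prop :=
  IsDensity S.ρ0 ∧ (∀ a ∈ S.A, ∀ c ∈ S.C, IsSuperOp (S.Ecmd a c)) ∧
    (∀ a ∈ S.A, ∀ P ∈ S.M a, P.IsPOVM)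

/-- Execution of a finite action sequence (composition of super-operators, in order). -/
def QSystem.run {Agent Cmd d : Type} (S : QSystem Agent Cmd d)
    (α : List (Agent × Cmd)) (ρ : Matrix d d ℂ) : Matrix d d ℂ :=
  α.foldl (fun τ p => S.Ecmd p.1 p.2 τ) ρ

/-- A sequence over A × C. -/
def QSystem.Valid {Agent Cmd d : Type} (S : QSystem Agent Cmd d)
    (α : List (Agent × Cmd)) : Prop :=
  ∀ p ∈ α, p.1 ∈ S.A ∧ p.2 ∈ S.C

/-- `purge G D α` deletes from `α` every pair `(a, c)` with `a ∈ G` and `c ∈ D`. -/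
def purge {Agent Cmd : Type} (G : Set Agent) (D : Set Cmd) :
    List (Agent × Cmd) → List (Agent × Cmd)
  | [] => []
  | p :: rest => if p.1 ∈ G ∧ p.2 ∈ D then purge G D rest else p :: purge G D rest

/-- A reachable density operator. -/
def QSystem.Reachable {Agent Cmd d : Type} (S : QSystem Agent Cmd d)
    (ρ : Matrix d d ℂ) : Prop :=
  ∃ α, S.Valid α ∧ S.run α S.ρ0 = ρ

/-- `∇ a`: the set of agents from which information may not flow to `a`. -/
def nabla {Agent : Type} (pol : Agent → Agent → Prop) (a : Agent) : Set Agent :=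
  { b | ¬ pol b a }

/-- The security degree `K(𝕊,↝)`. -/
def Kdeg {Agent Cmd d : Type} [Fintype d] (S : QSystem Agent Cmd d)
    (pol : Agent → Agent → Prop) : ℝ :=
  sSup { x | ∃ a ∈ S.A, ∃ α, S.Valid α ∧
    x = dM (S.M a) (S.run α S.ρ0) (S.run (purge (nabla pol a) Set.univ α) S.ρ0) }

/-- The `t`-bounded security degree `K_t(𝕊,↝)`. -/
def Kt {Agent Cmd d : Type} [Fintype d] (S : QSystem Agent Cmd d)
    (pol : Agent → Agent → Prop) (t : ℕ) : ℝ :=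
  sSup { x | ∃ a ∈ S.A, ∃ α, S.Valid α ∧ α.length ≤ t ∧
    x = dM (S.M a) (S.run α S.ρ0) (S.run (purge (nabla pol a) Set.univ α) S.ρ0) }

/-- The interference degree `Int(G₁, D | G₂)`. -/
def IntDeg {Agent Cmd d : Type} [Fintype d] (S : QSystem Agent Cmd d)
    (G1 : Set Agent) (D : Set Cmd) (G2 : Set Agent) : ℝ :=
  sSup { x | ∃ a ∈ G2, ∃ α, S.Valid α ∧
    x = dM (S.M a) (S.run α S.ρ0) (S.run (purge G1 D α) S.ρ0) }

/-- Trace distance `d(ρ,σ) = (1/2)·tr √((ρ−σ)†(ρ−σ))`. -/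
def traceDist {d : Type} [Fintype d] [DecidableEq d] (ρ σ : Matrix d d ℂ) : ℝ :=
  (1 / 2) * (((Matrix.posSemidef_conjTranspose_mul_self (ρ - σ)).1.eigenvectorUnitary.1 *
    diagonal (((↑) : ℝ → ℂ) ∘ (√·) ∘ (Matrix.posSemidef_conjTranspose_mul_self (ρ - σ)).1.eigenvalues) *
    (star (Matrix.posSemidef_conjTranspose_mul_self (ρ - σ)).1.eigenvectorUnitary :
      Matrix d d ℂ)).trace).re

end
noncomputable section

/-- Lift a measurement on the first subsystem to the composite system: `E_λ ↦ E_λ ⊗ I`. -/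
def PMeas.liftLeft {d1 d2 : Type} [Fintype d2] [DecidableEq d2]
    (P : PMeas d1) : PMeas (d1 × d2) where
  m := P.m
  E := fun i => P.E i ⊗ₖ (1 : Matrix d2 d2 ℂ)

/-- Lift a measurement on the second subsystem to the composite system: `E_λ ↦ I ⊗ E_λ`. -/
def PMeas.liftRight {d1 d2 : Type} [Fintype d1] [DecidableEq d1]
    (P : PMeas d2) : PMeas (d1 × d2) where
  m := P.m
  E := fun i => (1 : Matrix d1 d1 ℂ) ⊗ₖ P.E i

/-- The map `𝓔 ⊗ id` on the composite system, for `𝓔` acting on the first factor. -/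
def superLiftLeft {d1 d2 : Type} (F : Matrix d1 d1 ℂ → Matrix d1 d1 ℂ) :
    Matrix (d1 × d2) (d1 × d2) ℂ → Matrix (d1 × d2) (d1 × d2) ℂ :=
  fun σ => Matrix.of fun p q =>
    F (Matrix.of fun i j => σ (i, p.2) (j, q.2)) p.1 q.1

/-- The map `id ⊗ 𝓔′` on the composite system, for `𝓔′` acting on the second factor. -/
def superLiftRight {d1 d2 : Type} (F : Matrix d2 d2 ℂ → Matrix d2 d2 ℂ) :
    Matrix (d1 × d2) (d1 × d2) ℂ → Matrix (d1 × d2) (d1 × d2) ℂ :=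
  fun σ => Matrix.of fun p q =>
    F (Matrix.of fun k l => σ (p.1, k) (q.1, l)) p.2 q.2

/-- The composition `𝕊 ⊗ 𝕊′` of two quantum systems. -/
def QSystem.comp {Agent Cmd d1 d2 : Type}
    [Fintype d1] [DecidableEq d1] [Fintype d2] [DecidableEq d2]
    (S : QSystem Agent Cmd d1) (S' : QSystem Agent Cmd d2) :
    QSystem Agent Cmd (d1 × d2) where
  ρ0 := S.ρ0 ⊗ₖ S'.ρ0
  A := S.A ∪ S'.A
  C := S.C ∪ S'.C
  Ecmd := fun a c =>
    if a ∈ S.A ∧ c ∈ S.C then superLiftLeft (S.Ecmd a c)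
    else if a ∈ S'.A ∧ c ∈ S'.C then superLiftRight (S'.Ecmd a c)
    else id
  M := fun a =>
    (if a ∈ S.A then PMeas.liftLeft '' S.M a else ∅) ∪
    (if a ∈ S'.A then PMeas.liftRight '' S'.M a else ∅)

/-- Two policies are compatible if they agree on common agents. -/
def Compatible {Agent : Type} (A A' : Set Agent)
    (pol pol' : Agent → Agent → Prop) : Prop :=
  ∀ a ∈ A ∩ A', ∀ b ∈ A ∩ A', (pol a b ↔ pol' a b)

/-- The union `↝ ∪ ↝′` of a policy on `A` and a policy on `A′`. -/
def polUnion {Agent : Type} (A A' : Set Agent)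
    (pol pol' : Agent → Agent → Prop) : Agent → Agent → Prop :=
  fun a b => (a ∈ A ∧ b ∈ A ∧ pol a b) ∨ (a ∈ A' ∧ b ∈ A' ∧ pol' a b)

end
noncomputable section

/-!
Since the command sets are disjoint, each command of `𝕊 ⊗ 𝕊′` acts on one factor only, so
running `α` from `ρ₀ ⊗ ρ₀′` produces the Kronecker product of the runs, in `𝕊` and in `𝕊′`,
of the subsequences of `α` that belong to each system. By compatibility the union policy
agrees with `↝` on `A` and with `↝′` on `A′`, so purging commutes with taking these
subsequences. Every measurement of the composite is lifted from one factor, and since the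
other factor has trace one, it sees only its own factor: each distance in
`K_t(𝕊 ⊗ 𝕊′, ↝ ∪ ↝′)` is a distance in `K_t(𝕊, ↝)` or in `K_t(𝕊′, ↝′)`.
-/

open scoped MatrixOrder in
lemma Matrix.PosSemidef.trace_mul_nonneg {d : Type} [Fintype d] [DecidableEq d]
    {E ρ : Matrix d d ℂ} (hE : E.PosSemidef) (hρ : ρ.PosSemidef) : 0 ≤ (E * ρ).trace := by
  obtain ⟨B, rfl⟩ := CStarAlgebra.nonneg_iff_eq_star_mul_self.mp hE.nonneg
  rw [star_eq_conjTranspose, Matrix.mul_assoc, Matrix.trace_mul_comm]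
  exact (hρ.mul_mul_conjTranspose_same B).trace_nonneg

section Measurement

variable {d : Type} [Fintype d]

lemma PMeas.IsPOVM.sum_norm_trace_mul [DecidableEq d] {P : PMeas d} (hP : P.IsPOVM)
    {ρ : Matrix d d ℂ} (hρ : IsDensity ρ) : ∑ i, ‖(P.E i * ρ).trace‖ = 1 := by
  have h : ∑ i, (P.E i * ρ).trace = 1 := by
    rw [← Matrix.trace_sum, ← Finset.sum_mul, hP.2, one_mul, hρ.2]
  apply Complex.ofReal_injective
  push_cast
  rw [← h]
  exact Finset.sum_congr rfl fun i _ => Complex.norm_of_nonneg' ((hP.1 i).trace_mul_nonneg hρ.1)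

lemma dE_nonneg (P : PMeas d) (ρ σ : Matrix d d ℂ) : 0 ≤ dE P ρ σ := by
  unfold dE
  positivity

lemma dE_le_one [DecidableEq d] {P : PMeas d} (hP : P.IsPOVM) {ρ σ : Matrix d d ℂ}
    (hρ : IsDensity ρ) (hσ : IsDensity σ) : dE P ρ σ ≤ 1 := by
  have h := Finset.sum_le_sum fun i (_ : i ∈ Finset.univ) =>
    norm_sub_le (P.E i * ρ).trace (P.E i * σ).trace
  rw [Finset.sum_add_distrib, hP.sum_norm_trace_mul hρ, hP.sum_norm_trace_mul hσ] at h
  unfold dE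
  linarith

lemma dM_nonneg (M : Set (PMeas d)) (ρ σ : Matrix d d ℂ) : 0 ≤ dM M ρ σ :=
  Real.sSup_nonneg <| by
    rintro _ ⟨P, -, rfl⟩
    exact dE_nonneg P ρ σ

variable [DecidableEq d] {M : Set (PMeas d)} {ρ σ : Matrix d d ℂ}

lemma dM_le_one (hM : ∀ P ∈ M, P.IsPOVM) (hρ : IsDensity ρ) (hσ : IsDensity σ) :
    dM M ρ σ ≤ 1 :=
  Real.sSup_le (by rintro _ ⟨P, hP, rfl⟩; exact dE_le_one (hM P hP) hρ hσ) zero_le_one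

lemma dE_le_dM (hM : ∀ P ∈ M, P.IsPOVM) (hρ : IsDensity ρ) (hσ : IsDensity σ) {P : PMeas d}
    (hP : P ∈ M) : dE P ρ σ ≤ dM M ρ σ :=
  le_csSup ⟨1, by rintro _ ⟨Q, hQ, rfl⟩; exact dE_le_one (hM Q hQ) hρ hσ⟩ ⟨P, hP, rfl⟩

end Measurement

lemma purge_eq_filter {Agent Cmd : Type} (G : Set Agent) (D : Set Cmd)
    (α : List (Agent × Cmd)) : purge G D α = α.filter fun p => ¬(p.1 ∈ G ∧ p.2 ∈ D) := by
  induction α with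
  | nil => rfl
  | cons p α ih => by_cases h : p.1 ∈ G ∧ p.2 ∈ D <;> simp [purge, List.filter_cons, h, ih]

namespace QSystem

variable {Agent Cmd d : Type}

def restrict (S : QSystem Agent Cmd d) (α : List (Agent × Cmd)) : List (Agent × Cmd) :=
  α.filter fun p => p.1 ∈ S.A ∧ p.2 ∈ S.C

lemma valid_restrict (S : QSystem Agent Cmd d) (α : List (Agent × Cmd)) :
    S.Valid (S.restrict α) :=
  fun _ hp => of_decide_eq_true (List.mem_filter.mp hp).2

lemma length_restrict_le (S : QSystem Agent Cmd d) (α : List (Agent × Cmd)) :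
    (S.restrict α).length ≤ α.length :=
  List.length_filter_le _ α

lemma restrict_purge (S : QSystem Agent Cmd d) {G G' : Set Agent}
    (h : ∀ b ∈ S.A, (b ∈ G ↔ b ∈ G')) (α : List (Agent × Cmd)) :
    S.restrict (purge G Set.univ α) = purge G' Set.univ (S.restrict α) := by
  simp only [restrict, purge_eq_filter, List.filter_filter]
  refine List.filter_congr fun p _ => ?_
  by_cases hp : p.1 ∈ S.A ∧ p.2 ∈ S.C
  · simp [hp, h p.1 hp.1]
  · simp [hp]

lemma run_cons (S : QSystem Agent Cmd d) (p : Agent × Cmd) (α : List (Agent × Cmd))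
    (ρ : Matrix d d ℂ) : S.run (p :: α) ρ = S.run α (S.Ecmd p.1 p.2 ρ) :=
  rfl

lemma Valid.purge {S : QSystem Agent Cmd d} {α : List (Agent × Cmd)} (hα : S.Valid α)
    (G : Set Agent) (D : Set Cmd) : S.Valid (purge G D α) := by
  intro p hp
  rw [purge_eq_filter] at hp
  exact hα p (List.mem_of_mem_filter hp)

lemma Valid.run_mem {S : QSystem Agent Cmd d} {s : Set (Matrix d d ℂ)}
    (hs : ∀ a ∈ S.A, ∀ c ∈ S.C, Set.MapsTo (S.Ecmd a c) s s) {α : List (Agent × Cmd)}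
    (hα : S.Valid α) {ρ : Matrix d d ℂ} (hρ : ρ ∈ s) : S.run α ρ ∈ s := by
  induction α generalizing ρ with
  | nil => exact hρ
  | cons p α ih =>
    have hp := hα p List.mem_cons_self
    exact ih (fun q hq => hα q (List.mem_cons_of_mem _ hq)) (hs _ hp.1 _ hp.2 hρ)

lemma Kt_nonneg [Fintype d] (S : QSystem Agent Cmd d) (pol : Agent → Agent → Prop) (t : ℕ) :
    0 ≤ Kt S pol t :=
  Real.sSup_nonneg <| by
    rintro _ ⟨a, -, α, -, -, rfl⟩
    exact dM_nonneg _ _ _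

variable [Fintype d] [DecidableEq d] {S : QSystem Agent Cmd d}

lemma trace_run (hE : ∀ a ∈ S.A, ∀ c ∈ S.C, IsSuperOp (S.Ecmd a c))
    {α : List (Agent × Cmd)} (hα : S.Valid α) (ρ : Matrix d d ℂ) :
    (S.run α ρ).trace = ρ.trace :=
  hα.run_mem (s := {τ | τ.trace = ρ.trace})
    (fun a ha c hc τ hτ => ((hE a ha c hc).2.2 τ).trans hτ) rfl

lemma isDensity_run (hE : ∀ a ∈ S.A, ∀ c ∈ S.C, IsSuperOp (S.Ecmd a c))
    {α : List (Agent × Cmd)} (hα : S.Valid α) {ρ : Matrix d d ℂ} (hρ : IsDensity ρ) :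
    IsDensity (S.run α ρ) :=
  hα.run_mem (s := {τ | IsDensity τ})
    (fun a ha c hc τ hτ => ⟨(hE a ha c hc).2.1 τ hτ.1, ((hE a ha c hc).2.2 τ).trans hτ.2⟩) hρ

lemma dE_le_Kt (hS : S.WellFormed) (pol : Agent → Agent → Prop) {t : ℕ} {a : Agent}
    (ha : a ∈ S.A) {P : PMeas d} (hP : P ∈ S.M a) {α : List (Agent × Cmd)} (hα : S.Valid α)
    (hlen : α.length ≤ t) :
    dE P (S.run α S.ρ0) (S.run (purge (nabla pol a) Set.univ α) S.ρ0) ≤ Kt S pol t := by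
  refine (dE_le_dM (hS.2.2 a ha) (isDensity_run hS.2.1 hα hS.1)
    (isDensity_run hS.2.1 (hα.purge _ _) hS.1) hP).trans
    (le_csSup ⟨1, ?_⟩ ⟨a, ha, α, hα, hlen, rfl⟩)
  rintro _ ⟨b, hb, β, hβ, -, rfl⟩
  exact dM_le_one (hS.2.2 b hb) (isDensity_run hS.2.1 hβ hS.1)
    (isDensity_run hS.2.1 (hβ.purge _ _) hS.1)

end QSystem

section Composition

variable {Agent Cmd d1 d2 : Type}

lemma superLiftLeft_kronecker {F : Matrix d1 d1 ℂ → Matrix d1 d1 ℂ} (hF : IsLinearMap ℂ F)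
    (ρ : Matrix d1 d1 ℂ) (σ : Matrix d2 d2 ℂ) : superLiftLeft F (ρ ⊗ₖ σ) = F ρ ⊗ₖ σ := by
  ext ⟨i, k⟩ ⟨j, l⟩
  have h : (Matrix.of fun i' j' => (ρ ⊗ₖ σ) (i', k) (j', l)) = σ k l • ρ := by
    ext i' j'
    simp [mul_comm]
  change F (Matrix.of fun i' j' => (ρ ⊗ₖ σ) (i', k) (j', l)) i j = F ρ i j * σ k l
  rw [h, hF.map_smul]
  simp [mul_comm]

lemma superLiftRight_kronecker {F : Matrix d2 d2 ℂ → Matrix d2 d2 ℂ} (hF : IsLinearMap ℂ F)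
    (ρ : Matrix d1 d1 ℂ) (σ : Matrix d2 d2 ℂ) : superLiftRight F (ρ ⊗ₖ σ) = ρ ⊗ₖ F σ := by
  ext ⟨i, k⟩ ⟨j, l⟩
  have h : (Matrix.of fun k' l' => (ρ ⊗ₖ σ) (i, k') (j, l')) = ρ i j • σ := by
    ext k' l'
    simp
  change F (Matrix.of fun k' l' => (ρ ⊗ₖ σ) (i, k') (j, l')) k l = ρ i j * F σ k l
  rw [h, hF.map_smul]
  simp

lemma dE_liftLeft_kronecker [Fintype d1] [Fintype d2] [DecidableEq d2] (P : PMeas d1)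
    (ρ σ : Matrix d1 d1 ℂ) {ρ' σ' : Matrix d2 d2 ℂ} (hρ' : ρ'.trace = 1) (hσ' : σ'.trace = 1) :
    dE P.liftLeft (ρ ⊗ₖ ρ') (σ ⊗ₖ σ') = dE P ρ σ := by
  simp [dE, PMeas.liftLeft, ← Matrix.mul_kronecker_mul, Matrix.trace_kronecker, hρ', hσ']
  rfl

lemma dE_liftRight_kronecker [Fintype d1] [DecidableEq d1] [Fintype d2] (P : PMeas d2)
    {ρ σ : Matrix d1 d1 ℂ} (ρ' σ' : Matrix d2 d2 ℂ) (hρ : ρ.trace = 1) (hσ : σ.trace = 1) :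
    dE P.liftRight (ρ ⊗ₖ ρ') (σ ⊗ₖ σ') = dE P ρ' σ' := by
  simp [dE, PMeas.liftRight, ← Matrix.mul_kronecker_mul, Matrix.trace_kronecker, hρ, hσ]
  rfl

namespace QSystem

variable [Fintype d1] [DecidableEq d1] [Fintype d2] [DecidableEq d2]
  {S : QSystem Agent Cmd d1} {S' : QSystem Agent Cmd d2}

lemma comp_Ecmd_kronecker (hlin : ∀ a ∈ S.A, ∀ c ∈ S.C, IsLinearMap ℂ (S.Ecmd a c))
    (hlin' : ∀ a ∈ S'.A, ∀ c ∈ S'.C, IsLinearMap ℂ (S'.Ecmd a c)) (hC : S.C ∩ S'.C = ∅)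
    (a : Agent) (c : Cmd) (ρ : Matrix d1 d1 ℂ) (σ : Matrix d2 d2 ℂ) :
    (S.comp S').Ecmd a c (ρ ⊗ₖ σ) =
      (if a ∈ S.A ∧ c ∈ S.C then S.Ecmd a c ρ else ρ) ⊗ₖ
        (if a ∈ S'.A ∧ c ∈ S'.C then S'.Ecmd a c σ else σ) := by
  by_cases h : a ∈ S.A ∧ c ∈ S.C
  · have h' : ¬(a ∈ S'.A ∧ c ∈ S'.C) := fun h' =>
      Set.eq_empty_iff_forall_notMem.mp hC c ⟨h.2, h'.2⟩
    simp [comp, h, h', superLiftLeft_kronecker (hlin a h.1 c h.2)]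
  · by_cases h' : a ∈ S'.A ∧ c ∈ S'.C
    · simp [comp, h, h', superLiftRight_kronecker (hlin' a h'.1 c h'.2)]
    · simp [comp, h, h']

lemma mem_comp_M {a : Agent} {P : PMeas (d1 × d2)} :
    P ∈ (S.comp S').M a ↔ (a ∈ S.A ∧ ∃ Q ∈ S.M a, Q.liftLeft = P) ∨
      (a ∈ S'.A ∧ ∃ Q ∈ S'.M a, Q.liftRight = P) := by
  simp only [comp]
  split_ifs <;> simp [*]

lemma comp_run_kronecker (hlin : ∀ a ∈ S.A, ∀ c ∈ S.C, IsLinearMap ℂ (S.Ecmd a c))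
    (hlin' : ∀ a ∈ S'.A, ∀ c ∈ S'.C, IsLinearMap ℂ (S'.Ecmd a c)) (hC : S.C ∩ S'.C = ∅)
    (α : List (Agent × Cmd)) (ρ : Matrix d1 d1 ℂ) (σ : Matrix d2 d2 ℂ) :
    (S.comp S').run α (ρ ⊗ₖ σ) = S.run (S.restrict α) ρ ⊗ₖ S'.run (S'.restrict α) σ := by
  induction α generalizing ρ σ with
  | nil => rfl
  | cons p α ih =>
    rw [run_cons, comp_Ecmd_kronecker hlin hlin' hC, ih]
    by_cases h : p.1 ∈ S.A ∧ p.2 ∈ S.C <;> by_cases h' : p.1 ∈ S'.A ∧ p.2 ∈ S'.C <;>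
      simp [restrict, run_cons, h, h']

end QSystem

lemma mem_nabla_polUnion_left {Agent : Type} {A A' : Set Agent}
    {pol pol' : Agent → Agent → Prop} (hcompat : Compatible A A' pol pol') {a b : Agent}
    (ha : a ∈ A) (hb : b ∈ A) : b ∈ nabla (polUnion A A' pol pol') a ↔ b ∈ nabla pol a := by
  refine not_congr ⟨?_, fun h => Or.inl ⟨hb, ha, h⟩⟩
  rintro (⟨-, -, h⟩ | ⟨hb', ha', h⟩)
  · exact h
  · exact (hcompat b ⟨hb, hb'⟩ a ⟨ha, ha'⟩).mpr h

lemma mem_nabla_polUnion_right {Agent : Type} {A A' : Set Agent}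
    {pol pol' : Agent → Agent → Prop} (hcompat : Compatible A A' pol pol') {a b : Agent}
    (ha : a ∈ A') (hb : b ∈ A') : b ∈ nabla (polUnion A A' pol pol') a ↔ b ∈ nabla pol' a := by
  refine not_congr ⟨?_, fun h => Or.inr ⟨hb, ha, h⟩⟩
  rintro (⟨hb', ha', h⟩ | ⟨-, -, h⟩)
  · exact (hcompat b ⟨hb', hb⟩ a ⟨ha', ha⟩).mp h
  · exact h

end Composition

theorem compositionality_Kt_general {Agent Cmd : Type} {n n' : ℕ}
    (S : QSystem Agent Cmd (Fin n)) (S' : QSystem Agent Cmd (Fin n'))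
    (hS : S.WellFormed) (hS' : S'.WellFormed)
    (hC : S.C ∩ S'.C = ∅)
    (pol pol' : Agent → Agent → Prop)
    (hcompat : Compatible S.A S'.A pol pol')
    (t : ℕ) :
    Kt (S.comp S') (polUnion S.A S'.A pol pol') t ≤ Kt S pol t + Kt S' pol' t := by
  have hsum_nonneg := add_nonneg (S.Kt_nonneg pol t) (S'.Kt_nonneg pol' t)
  refine Real.sSup_le ?_ hsum_nonneg
  rintro _ ⟨a, -, α, -, hlen, rfl⟩
  refine Real.sSup_le ?_ hsum_nonneg
  rintro _ ⟨P, hP, rfl⟩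
  have hsplit := QSystem.comp_run_kronecker (fun a ha c hc => (hS.2.1 a ha c hc).1)
    (fun a ha c hc => (hS'.2.1 a ha c hc).1) hC
  have htr {β} := (QSystem.trace_run hS.2.1 (S.valid_restrict β) S.ρ0).trans hS.1.2
  have htr' {β} := (QSystem.trace_run hS'.2.1 (S'.valid_restrict β) S'.ρ0).trans hS'.1.2
  rw [show (S.comp S').ρ0 = S.ρ0 ⊗ₖ S'.ρ0 from rfl, hsplit, hsplit]
  rcases QSystem.mem_comp_M.mp hP with ⟨ha, Q, hQ, rfl⟩ | ⟨ha, Q, hQ, rfl⟩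
  · rw [dE_liftLeft_kronecker Q _ _ htr' htr',
      S.restrict_purge (fun _ => mem_nabla_polUnion_left hcompat ha)]
    exact (QSystem.dE_le_Kt hS pol ha hQ (S.valid_restrict α)
      ((S.length_restrict_le α).trans hlen)).trans (le_add_of_nonneg_right (S'.Kt_nonneg pol' t))
  · rw [dE_liftRight_kronecker Q _ _ htr htr,
      S'.restrict_purge (fun _ => mem_nabla_polUnion_right hcompat ha)]
    exact (QSystem.dE_le_Kt hS' pol' ha hQ (S'.valid_restrict α)
      ((S'.length_restrict_le α).trans hlen)).trans (le_add_of_nonneg_left (S.Kt_nonneg pol t))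

/-- **Compositionality of security (bounded time).** For quantum systems with disjoint
command sets and compatible policies, for every `t`,
`K_t(𝕊 ⊗ 𝕊′, ↝ ∪ ↝′) ≤ K_t(𝕊, ↝) + K_t(𝕊′, ↝′)`. -/
theorem compositionality_Kt {Agent Cmd : Type} {n n' : ℕ} (hn : 0 < n) (hn' : 0 < n')
    (S : QSystem Agent Cmd (Fin n)) (S' : QSystem Agent Cmd (Fin n'))
    (hS : S.WellFormed) (hS' : S'.WellFormed)
    (hC : S.C ∩ S'.C = ∅)
    (pol pol' : Agent → Agent → Prop)
    (hpol : ∀ a ∈ S.A, pol a a) (hpol' : ∀ a ∈ S'.A, pol' a a)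
    (hcompat : Compatible S.A S'.A pol pol')
    (t : ℕ) :
    Kt (S.comp S') (polUnion S.A S'.A pol pol') t ≤ Kt S pol t + Kt S' pol' t :=
  compositionality_Kt_general S S' hS hS' hC pol pol' hcompat t

end
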